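/- arXiv:math/0410325 — 3 statements merged into one kernel-verified Lean document; each statement's English description precedes it below -/
import Mathlib

section
/- Let g be a semisimple Lie algebra with a ℤ-grading g = ⊕_j g_j induced by a parabolic subalgebra p = ⊕_{j≥0} g_j with Levi factor m = g_0 and nilradical n = ⊕_{j>0} g_j. If x ∈ g_1 satisfies dim(centralizer of x in g) = dim m, then [p, x] = n, i.e. x is a Richardson element for p. -/
/-!
Since `x` has degree one, `ad x` maps `p = ⊕_{j ≥ 0} g_j` into `n = ⊕_{j > 0} g_j`. Rank-nullity
for `ad x` restricted to `p` gives `dim [p, x] ≥ dim p - dim g^x = (dim g_0 + dim n) - dim g_0`,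
so the inclusion `[p, x] ⊆ n` is an equality.
-/

open LieAlgebra Module

namespace Submodule

variable {K V W : Type*} [Field K] [AddCommGroup V] [Module K V] [AddCommGroup W] [Module K W]
  [FiniteDimensional K V]

theorem finrank_le_finrank_map_add_finrank_ker (f : V →ₗ[K] W) (p : Submodule K V) :
    finrank K p ≤ finrank K (p.map f) + finrank K (LinearMap.ker f) := by
  rw [← (f.domRestrict p).finrank_range_add_finrank_ker, LinearMap.range_domRestrict,
    LinearMap.ker_domRestrict]
  gcongr
  rw [← finrank_map_subtype_eq, map_comap_subtype]
  exact finrank_mono inf_le_right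

theorem map_eq_of_le_of_finrank_add_finrank_ker_le [FiniteDimensional K W] {f : V →ₗ[K] W} {p : Submodule K V}
    {n : Submodule K W} (hle : p.map f ≤ n)
    (hdim : finrank K n + finrank K (LinearMap.ker f) ≤ finrank K p) : p.map f = n :=
  eq_of_le_of_finrank_le hle (by have := finrank_le_finrank_map_add_finrank_ker f p; omega)

theorem finrank_sup_of_disjoint {s t : Submodule K V} (h : Disjoint s t) :
    finrank K ↥(s ⊔ t) = finrank K s + finrank K t := by
  rw [← finrank_sup_add_finrank_inf_eq, h.eq_bot, finrank_bot, add_zero]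

end Submodule

theorem biSup_Ici_eq_sup_biSup_Ioi {α ι : Type*} [CompleteLattice α] [LinearOrder ι]
    (g : ι → α) (a : ι) : ⨆ j ∈ Set.Ici a, g j = g a ⊔ ⨆ j ∈ Set.Ioi a, g j := by
  rw [← Set.Ioi_insert, iSup_insert]

theorem LieAlgebra.map_ad_biSup_le {R L ι : Type*} [CommRing R] [LieRing L] [LieAlgebra R L]
    [Add ι] {g : ι → Submodule R L}
    (hgrade : ∀ i j : ι, ∀ x ∈ g i, ∀ y ∈ g j, ⁅x, y⁆ ∈ g (i + j)) {i : ι} {x : L} (hx : x ∈ g i)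
    {s t : Set ι} (hst : ∀ j ∈ s, i + j ∈ t) :
    (⨆ j ∈ s, g j).map (ad R L x) ≤ ⨆ j ∈ t, g j := by
  rw [Submodule.map_le_iff_le_comap]
  exact iSup₂_le fun j hj y hy ↦
    le_iSup₂ (f := fun j (_ : j ∈ t) ↦ g j) (i + j) (hst j hj) (hgrade i j x hx y hy)

theorem stmt4_general {L : Type*} [LieRing L] [LieAlgebra ℂ L] [FiniteDimensional ℂ L]
    (g : ℤ → Submodule ℂ L) (hinternal : DirectSum.IsInternal g)
    (hgrade : ∀ i j : ℤ, ∀ x ∈ g i, ∀ y ∈ g j, ⁅x, y⁆ ∈ g (i + j))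
    (x : L) (hx : x ∈ g 1)
    (hdim : Module.finrank ℂ (LinearMap.ker (ad ℂ L x)) =
      Module.finrank ℂ (g 0)) :
    Submodule.map (ad ℂ L x) (⨆ j ∈ Set.Ici (0 : ℤ), g j) =
      ⨆ j ∈ Set.Ioi (0 : ℤ), g j := by
  have hmap : (⨆ j ∈ Set.Ici (0 : ℤ), g j).map (ad ℂ L x) ≤ ⨆ j ∈ Set.Ioi (0 : ℤ), g j :=
    map_ad_biSup_le hgrade hx fun j hj ↦ by
      simp only [Set.mem_Ici, Set.mem_Ioi] at hj ⊢
      omega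
  have hdisj : Disjoint (g 0) (⨆ j ∈ Set.Ioi (0 : ℤ), g j) :=
    hinternal.submodule_iSupIndep.disjoint_biSup Set.self_notMem_Ioi
  refine Submodule.map_eq_of_le_of_finrank_add_finrank_ker_le hmap ?_
  rw [hdim, biSup_Ici_eq_sup_biSup_Ioi, Submodule.finrank_sup_of_disjoint hdisj, add_comm]

/-- Let `g` be a semisimple complex Lie algebra with a `ℤ`-grading
`g = ⊕_j g_j` (induced by a parabolic subalgebra `p = ⊕_{j≥0} g_j`, with Levi
factor `m = g_0` and nilradical `n = ⊕_{j>0} g_j`).  If `x ∈ g_1` satisfies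
`dim g^x = dim g_0`, then `[p, x] = n`, i.e. `x` is a Richardson element. -/
theorem stmt4 {L : Type*} [LieRing L] [LieAlgebra ℂ L] [FiniteDimensional ℂ L]
    [LieAlgebra.IsSemisimple ℂ L]
    (g : ℤ → Submodule ℂ L) (hinternal : DirectSum.IsInternal g)
    (hgrade : ∀ i j : ℤ, ∀ x ∈ g i, ∀ y ∈ g j, ⁅x, y⁆ ∈ g (i + j))
    (x : L) (hx : x ∈ g 1)
    (hdim : Module.finrank ℂ (LinearMap.ker (ad ℂ L x)) =
      Module.finrank ℂ (g 0)) :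
    Submodule.map (ad ℂ L x) (⨆ j ∈ Set.Ici (0 : ℤ), g j) =
      ⨆ j ∈ Set.Ioi (0 : ℤ), g j :=
  stmt4_general g hinternal hgrade x hx hdim
end

section
/- Let a, a' be positive integers with a odd, a' even, a ≤ a'. Let X be an a×a' complex matrix of rank a having exactly a nonzero entries (so exactly one nonzero entry in each row, all in distinct columns, and at least one zero column). Let Z be an a'×a' diagonal invertible matrix that is symmetric about the skew-diagonal, i.e. Z_{kk} = Z_{a'+1-k, a'+1-k} for all k. Let Y = −J_{a'} Xᵀ J_a (the negative skew-transpose of X). If a = a' − 1, then the a×a matrix X Z Y has at most a − 1 nonzero entries and rank at most a − 1 < a. -/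
open Matrix

/-- Let `a` be odd, `a' = a + 1` even, `X` an `a × a'` complex matrix of rank
`a` with exactly one nonzero entry in each row, all in distinct columns.  Let
`Z` be an invertible diagonal `a' × a'` matrix symmetric about the
skew-diagonal, and let `Y = -J_{a'} Xᵀ J_a` be the negative skew-transpose of
`X`.  Then `X Z Y` has at most `a - 1` nonzero entries and rank at most
`a - 1 < a`. -/
theorem stmt9 (a a' : ℕ) (hodd : Odd a) (heven : Even a') (heq : a + 1 = a')
    (X : Matrix (Fin a) (Fin a') ℂ) (hrk : X.rank = a)
    (f : Fin a → Fin a') (hf : Function.Injective f)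
    (hX : ∀ i j, X i j ≠ 0 ↔ j = f i)
    (Z : Matrix (Fin a') (Fin a') ℂ) (hdiag : Z.IsDiag) (hunit : IsUnit Z)
    (hsym : ∀ k : Fin a', Z k k =
      Z ⟨a' - 1 - (k : ℕ), by have := k.isLt; omega⟩
        ⟨a' - 1 - (k : ℕ), by have := k.isLt; omega⟩) :
    let Ja : Matrix (Fin a) (Fin a) ℂ :=
      Matrix.of fun i j => if (i : ℕ) + (j : ℕ) + 1 = a then 1 else 0
    let Ja' : Matrix (Fin a') (Fin a') ℂ :=
      Matrix.of fun i j => if (i : ℕ) + (j : ℕ) + 1 = a' then 1 else 0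
    let Y : Matrix (Fin a') (Fin a) ℂ := -(Ja' * Xᵀ * Ja)
    ((Finset.univ : Finset (Fin a × Fin a)).filter
        fun pq => (X * Z * Y) pq.1 pq.2 ≠ 0).card ≤ a - 1 ∧
    (X * Z * Y).rank ≤ a - 1 ∧ a - 1 < a := by
  intro Ja Ja' Y
  obtain ⟨m, hm⟩ := hodd
  -- reversal maps
  set ra : Fin a → Fin a := fun q => ⟨a - 1 - (q : ℕ), by have := q.isLt; omega⟩ with hradef
  set ra' : Fin a' → Fin a' := fun j => ⟨a' - 1 - (j : ℕ), by have := j.isLt; omega⟩ with hra'def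
  -- Y entries
  have hY : ∀ (j : Fin a') (q : Fin a), Y j q = - X (ra q) (ra' j) := by
    intro j q
    show -((Ja' * Xᵀ * Ja) j q) = _
    rw [mul_apply]
    rw [Fintype.sum_eq_single (ra q) (fun b hb => by
      have : ¬ ((b : ℕ) + (q : ℕ) + 1 = a) := by
        intro h
        apply hb
        apply Fin.ext
        have := q.isLt
        simp only [hradef]
        omega
      simp [Ja, this])]
    have hJa : Ja (ra q) q = 1 := by
      have := q.isLt
      simp only [Ja, hradef, of_apply]
      rw [if_pos (by omega)]
    rw [hJa, mul_one, mul_apply]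
    rw [Fintype.sum_eq_single (ra' j) (fun b hb => by
      have : ¬ ((j : ℕ) + (b : ℕ) + 1 = a') := by
        intro h
        apply hb
        apply Fin.ext
        have := j.isLt
        simp only [hra'def]
        omega
      simp [Ja', this])]
    have hJa' : Ja' j (ra' j) = 1 := by
      have := j.isLt
      simp only [Ja', hra'def, of_apply]
      rw [if_pos (by omega)]
    rw [hJa', one_mul, transpose_apply]
  have hXzero : ∀ p l, l ≠ f p → X p l = 0 := fun p l h => by
    by_contra h'; exact h ((hX p l).1 h')
  have hXZ : ∀ p j, (X * Z) p j = X p (f p) * Z (f p) j := by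
    intro p j
    rw [mul_apply]
    rw [Fintype.sum_eq_single (f p) (fun l hl => by rw [hXzero p l hl, zero_mul])]
  have key : ∀ p q, (X * Z * Y) p q =
      -(X p (f p) * Z (f p) (f p) * X (ra q) (ra' (f p))) := by
    intro p q
    rw [mul_apply]
    rw [Fintype.sum_eq_single (f p) (fun j hj => by
      rw [hXZ, hdiag (fun h => hj (h.symm)), mul_zero, zero_mul])]
    rw [hXZ, hY]
    ring
  -- nonzero diagonal of Z
  have hZne : ∀ j, Z j j ≠ 0 := by
    have hdet : Z.det ≠ 0 := ((Matrix.isUnit_iff_isUnit_det Z).mp hunit).ne_zero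
    have hZd : Z = Matrix.diagonal (fun i => Z i i) := by
      ext i l
      by_cases h : i = l
      · subst h; simp
      · rw [Matrix.diagonal_apply_ne _ h]; exact hdiag h
    intro j hj
    rw [hZd, det_diagonal] at hdet
    exact hdet (Finset.prod_eq_zero (Finset.mem_univ j) hj)
  -- characterization of nonzero entries
  have hiff : ∀ p q, (X * Z * Y) p q ≠ 0 ↔ ra' (f p) = f (ra q) := by
    intro p q
    rw [key]
    constructor
    · intro h
      have hx : X (ra q) (ra' (f p)) ≠ 0 := by
        intro h0; apply h; rw [h0]; ring
      exact (hX _ _).1 hx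
    · intro h
      have h1 : X p (f p) ≠ 0 := (hX p (f p)).2 rfl
      have h3 : X (ra q) (ra' (f p)) ≠ 0 := (hX _ _).2 h
      exact neg_ne_zero.mpr (mul_ne_zero (mul_ne_zero h1 (hZne _)) h3)
  -- the missing column k
  have hnotsurj : ¬ Function.Surjective f := by
    intro h
    have := Fintype.card_le_of_surjective f h
    simp only [Fintype.card_fin] at this
    omega
  rw [Function.Surjective] at hnotsurj
  push_neg at hnotsurj
  obtain ⟨k, hk⟩ := hnotsurj
  have hkne : ra' k ≠ k := by
    intro h
    have := congrArg Fin.val h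
    simp only [hra'def] at this
    have := k.isLt
    omega
  have himg : Finset.image f Finset.univ = Finset.univ.erase k := by
    apply Finset.eq_of_subset_of_card_le
    · intro x hx
      simp only [Finset.mem_image, Finset.mem_univ, true_and] at hx
      obtain ⟨i, rfl⟩ := hx
      exact Finset.mem_erase.mpr ⟨hk i, Finset.mem_univ _⟩
    · rw [Finset.card_erase_of_mem (Finset.mem_univ k), Finset.card_univ, Fintype.card_fin,
        Finset.card_image_of_injective _ hf, Finset.card_univ, Fintype.card_fin]
      omega
  have hp₀ : ra' k ∈ Finset.image f Finset.univ := by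
    rw [himg]; exact Finset.mem_erase.mpr ⟨hkne, Finset.mem_univ _⟩
  rw [Finset.mem_image] at hp₀
  obtain ⟨p₀, -, hp₀⟩ := hp₀
  -- row p₀ is zero
  have hrow : ∀ q, (X * Z * Y) p₀ q = 0 := by
    intro q
    by_contra h
    have h2 := (hiff p₀ q).1 h
    rw [hp₀] at h2
    have hkk : ra' (ra' k) = k := by
      apply Fin.ext
      simp only [hra'def]
      have := k.isLt
      omega
    rw [hkk] at h2
    exact hk (ra q) h2.symm
  -- the count
  have hcard : ((Finset.univ : Finset (Fin a × Fin a)).filter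
      fun pq => (X * Z * Y) pq.1 pq.2 ≠ 0).card ≤ a - 1 := by
    have hle := Finset.card_le_card_of_injOn (f := Prod.fst)
      (s := (Finset.univ : Finset (Fin a × Fin a)).filter
        fun pq => (X * Z * Y) pq.1 pq.2 ≠ 0)
      (t := Finset.univ.erase p₀)
      (fun pq hpq => by
        simp only [Finset.mem_coe, Finset.mem_filter, Finset.mem_univ, true_and] at hpq
        refine Finset.mem_erase.mpr ⟨?_, Finset.mem_univ _⟩
        intro h
        exact hpq (h ▸ hrow pq.2))
      (fun pq hpq pq' hpq' h => by
        simp only [Finset.coe_filter, Set.mem_setOf_eq] at hpq hpq'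
        have h1 := (hiff pq.1 pq.2).1 hpq.2
        have h2 := (hiff pq'.1 pq'.2).1 hpq'.2
        rw [h] at h1
        have h3 : ra pq.2 = ra pq'.2 := hf (h1.symm.trans h2)
        have h4 : pq.2 = pq'.2 := by
          have := congrArg Fin.val h3
          simp only [hradef] at this
          have := pq.2.isLt
          have := pq'.2.isLt
          exact Fin.ext (by omega)
        exact Prod.ext h h4)
    rw [Finset.card_erase_of_mem (Finset.mem_univ p₀), Finset.card_univ, Fintype.card_fin] at hle
    exact hle
  refine ⟨hcard, ?_, by omega⟩
  -- rank
  have hle : LinearMap.range (X * Z * Y).mulVecLin ≤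
      LinearMap.ker (LinearMap.proj (R := ℂ) (φ := fun _ : Fin a => ℂ) p₀) := by
    rintro w ⟨v, rfl⟩
    simp only [LinearMap.mem_ker, LinearMap.proj_apply, mulVecLin_apply, mulVec, dotProduct]
    exact Finset.sum_eq_zero (fun j _ => by rw [hrow j, zero_mul])
  have hfr := LinearMap.finrank_range_add_finrank_ker
    (LinearMap.proj (R := ℂ) (φ := fun _ : Fin a => ℂ) p₀)
  have hsurj : Function.Surjective (LinearMap.proj (R := ℂ) (φ := fun _ : Fin a => ℂ) p₀) :=
    fun c => ⟨fun _ => c, rfl⟩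
  rw [LinearMap.range_eq_top.mpr hsurj, finrank_top, Module.finrank_self,
    Module.finrank_fintype_fun_eq_card, Fintype.card_fin] at hfr
  have hmono := Submodule.finrank_mono hle
  have hrankdef : (X * Z * Y).rank =
      Module.finrank ℂ (LinearMap.range (X * Z * Y).mulVecLin) := rfl
  rw [hrankdef]
  omega
end

section
/- Let a_1 ≤ a_2 ≤ ⋯ ≤ a_{r+1} be positive integers and for 1 ≤ i ≤ r define the a_i × a_{i+1} matrix X_i = [J_{a_i} 0] if i is odd and X_i = [0 J_{a_i}] if i is even. Then for all 1 ≤ i ≤ i + j − 1 ≤ r, the product X_i X_{i+1} ⋯ X_{i+j-1} has rank a_i (maximal possible rank for an a_i × a_{i+j} matrix with a_i ≤ a_{i+j}). -/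
/-- The `a_i × a_{i+1}` rectangle matrix of the recipe (zero-based `i`):
`[J_{a_i} 0]` if `i` is odd one-based (i.e. `i % 2 = 0` zero-based), and
`[0 J_{a_i}]` otherwise. -/
def recipeX (a : ℕ → ℕ) (i : ℕ) : Matrix (Fin (a i)) (Fin (a (i + 1))) ℂ :=
  Matrix.of fun t s =>
    if (if i % 2 = 0 then (t : ℕ) + (s : ℕ) + 1 = a i
        else (t : ℕ) + (s : ℕ) + 1 = a (i + 1)) then 1 else 0

/-- The product `X_i X_{i+1} ⋯ X_{i+j-1}` of `j` consecutive rectangle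
matrices. -/
noncomputable def recipeProd (a : ℕ → ℕ) (i : ℕ) : (j : ℕ) → Matrix (Fin (a i)) (Fin (a (i + j))) ℂ
  | 0 => (1 : Matrix (Fin (a i)) (Fin (a i)) ℂ)
  | j + 1 => recipeProd a i j * recipeX a (i + j)

lemma recipeX_eq (a : ℕ → ℕ) (i : ℕ) (h : a i ≤ a (i + 1)) :
    ∃ G : Fin (a i) → Fin (a (i + 1)), Function.Injective G ∧
      recipeX a i = Matrix.of fun t s => if s = G t then 1 else 0 := by
  rcases Nat.even_or_odd i with he | ho
  · refine ⟨fun t => ⟨a i - 1 - (t : ℕ), by omega⟩, ?_, ?_⟩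
    · intro t t' htt'
      have h1 := t.isLt; have h2 := t'.isLt
      have := Fin.mk.injEq (a i - 1 - (t : ℕ)) _ (a i - 1 - (t' : ℕ)) _ ▸ htt'
      ext; simp only [Fin.mk.injEq] at htt' ⊢; omega
    · ext t s
      have h1 := t.isLt; have h2 := s.isLt
      simp only [recipeX, Matrix.of_apply, Nat.even_iff.mp he, if_true, Fin.ext_iff]
      congr 1
      simp only [eq_iff_iff]
      omega
  · refine ⟨fun t => ⟨a (i + 1) - 1 - (t : ℕ), by omega⟩, ?_, ?_⟩
    · intro t t' htt'
      have h1 := t.isLt; have h2 := t'.isLt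
      ext; simp only [Fin.mk.injEq] at htt' ⊢; omega
    · ext t s
      have h1 := t.isLt; have h2 := s.isLt
      have hne : ¬ (i % 2 = 0) := by have := Nat.odd_iff.mp ho; omega
      simp only [recipeX, Matrix.of_apply, hne, if_false, Fin.ext_iff]
      congr 1
      simp only [eq_iff_iff]
      omega

lemma recipeProd_eq (a : ℕ → ℕ) (r : ℕ)
    (hmono : ∀ i, i < r → a i ≤ a (i + 1)) (i : ℕ) :
    ∀ j, i + j ≤ r → ∃ F : Fin (a i) → Fin (a (i + j)), Function.Injective F ∧
      recipeProd a i j = Matrix.of fun t s => if s = F t then 1 else 0 := by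
  intro j
  induction j with
  | zero =>
    intro _
    exact ⟨id, Function.injective_id, by ext t s; simp [recipeProd, Matrix.one_apply, eq_comm]⟩
  | succ j ih =>
    intro hij
    obtain ⟨F, hFinj, hF⟩ := ih (by omega)
    obtain ⟨G, hGinj, hG⟩ := recipeX_eq a (i + j) (hmono (i + j) (by omega))
    refine ⟨G ∘ F, hGinj.comp hFinj, ?_⟩
    show recipeProd a i j * recipeX a (i + j) = _
    rw [hF, hG]
    ext t s
    simp only [Matrix.mul_apply, Matrix.of_apply, Function.comp_apply]
    rw [Finset.sum_eq_single (F t)]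
    · simp
    · intro b _ hb; simp [hb]
    · simp

/-- For `a_1 ≤ a_2 ≤ ⋯ ≤ a_{r+1}` (zero-based `a 0 ≤ ⋯ ≤ a r`) positive, every
product `X_i X_{i+1} ⋯ X_{i+j-1}` of consecutive rectangle matrices has full
row rank `a_i`. -/
theorem stmt12 (a : ℕ → ℕ) (r : ℕ)
    (hpos : ∀ i, i ≤ r → 0 < a i)
    (hmono : ∀ i, i < r → a i ≤ a (i + 1))
    (i j : ℕ) (hj : 1 ≤ j) (hij : i + j ≤ r) :
    (recipeProd a i j).rank = a i := by
  obtain ⟨F, hFinj, hF⟩ := recipeProd_eq a r hmono i j hij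
  set M := recipeProd a i j
  set N : Matrix (Fin (a (i + j))) (Fin (a i)) ℂ :=
    Matrix.of fun s t => if s = F t then 1 else 0 with hN
  have hMN : M * N = 1 := by
    ext t t'
    simp only [Matrix.mul_apply, hF, hN, Matrix.of_apply, Matrix.one_apply]
    rw [Finset.sum_eq_single (F t)]
    · simp [hFinj.eq_iff, eq_comm]
    · intro b _ hb; simp [hb]
    · simp
  refine le_antisymm ?_ ?_
  · simpa using M.rank_le_card_height
  · calc (a i : ℕ) = (1 : Matrix (Fin (a i)) (Fin (a i)) ℂ).rank := by
          simp [Matrix.rank_one]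
      _ = (M * N).rank := by rw [hMN]
      _ ≤ M.rank := Matrix.rank_mul_le_left M N
end
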